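/- Let (H, r) be a coquasi-triangular Hopf algebra, g ∈ H a group-like element, f: H → H a k-linear map, and X a left H-comodule. Set F = ε ∘ f. If f satisfies g⁻¹ h₁ g ⊗ f(h₂) = f(h₁) ⊗ h₂ for all h ∈ H (the bicomodule condition with twisted left coaction), then for all x ∈ X: r(x_{-2} ⊗ g) F(x_{-1}) x_0 = F(x_{-2}) r(x_{-1} ⊗ g) x_0. -/

import Mathlib

/-!
Write `φ = r(- ⊗ g)`, `F = ε ∘ f` and `*` for convolution of functionals on `H`. By
coassociativity of `X` the two sides are `((φ * F) ⊗ id) ρ(x)` and `((F * φ) ⊗ id) ρ(x)`, so it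
suffices that `φ * F = F * φ`. As `g` is group-like, `φ` is an algebra map `H → k`, hence
invariant under conjugation by `g`, as is `ε`. Pairing the twisted bicomodule condition on `f`
with `φ ⊗ ε` and with `ε ⊗ φ` therefore gives `φ * F = φ ∘ f = F * φ`.
-/

open TensorProduct Coalgebra

noncomputable section

variable (k H : Type) [Field k] [Ring H] [HopfAlgebra k H]

/-- Convolution product of two linear functionals on the coalgebra `H ⊗ H`. -/
def convMul (f g : H ⊗[k] H →ₗ[k] k) : H ⊗[k] H →ₗ[k] k :=
  LinearMap.mul' k k ∘ₗ TensorProduct.map f g ∘ₗ (Coalgebra.comul (R := k))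

/-- The coquasi-triangular axioms for a linear functional `r : H ⊗ H → k`:
`r` is convolution invertible, `r(c ⊗ ab) = r(c₁ ⊗ b) r(c₂ ⊗ a)`,
`r(ab ⊗ c) = r(a ⊗ c₁) r(b ⊗ c₂)`, and `r(a₁ ⊗ b₁) a₂b₂ = r(a₂ ⊗ b₂) b₁a₁`. -/
structure IsCQT (r : H ⊗[k] H →ₗ[k] k) : Prop where
  conv_inv : ∃ ri : H ⊗[k] H →ₗ[k] k,
    convMul k H r ri = Coalgebra.counit ∧ convMul k H ri r = Coalgebra.counit
  ax1 : r ∘ₗ TensorProduct.map LinearMap.id (LinearMap.mul' k H) =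
    LinearMap.mul' k k ∘ₗ TensorProduct.map r r ∘ₗ
      (TensorProduct.tensorTensorTensorComm k H H H H).toLinearMap ∘ₗ
      TensorProduct.map (Coalgebra.comul (R := k)) (TensorProduct.comm k H H).toLinearMap
  ax2 : r ∘ₗ TensorProduct.map (LinearMap.mul' k H) LinearMap.id =
    LinearMap.mul' k k ∘ₗ TensorProduct.map r r ∘ₗ
      (TensorProduct.tensorTensorTensorComm k H H H H).toLinearMap ∘ₗ
      TensorProduct.map LinearMap.id (Coalgebra.comul (R := k))
  ax3 : (TensorProduct.lid k H).toLinearMap ∘ₗ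
      TensorProduct.map r (LinearMap.mul' k H) ∘ₗ
      (TensorProduct.tensorTensorTensorComm k H H H H).toLinearMap ∘ₗ
      TensorProduct.map (Coalgebra.comul (R := k)) (Coalgebra.comul (R := k)) =
    (TensorProduct.lid k H).toLinearMap ∘ₗ
      TensorProduct.map r (LinearMap.mul' k H ∘ₗ (TensorProduct.comm k H H).toLinearMap) ∘ₗ
      (TensorProduct.comm k (H ⊗[k] H) (H ⊗[k] H)).toLinearMap ∘ₗ
      (TensorProduct.tensorTensorTensorComm k H H H H).toLinearMap ∘ₗ
      TensorProduct.map (Coalgebra.comul (R := k)) (Coalgebra.comul (R := k))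

/-- A group-like element: `Δ(g) = g ⊗ g` and `ε(g) = 1`. -/
def IsGroupLike (g : H) : Prop :=
  Coalgebra.comul (R := k) g = g ⊗ₜ[k] g ∧ Coalgebra.counit (R := k) g = (1 : k)

section

variable {k H}

lemma IsGroupLikeElem.tmul {R A B : Type*} [CommSemiring R] [AddCommMonoid A] [Module R A]
    [Coalgebra R A] [AddCommMonoid B] [Module R B] [Coalgebra R B] {a : A} {b : B}
    (ha : IsGroupLikeElem R a) (hb : IsGroupLikeElem R b) : IsGroupLikeElem R (a ⊗ₜ[R] b) where
  counit_eq_one := by simp [TensorProduct.counit_def, ha.counit_eq_one, hb.counit_eq_one]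
  comul_eq_tmul_self := by simp [TensorProduct.comul_def, ha.comul_eq_tmul_self,
    hb.comul_eq_tmul_self]

lemma IsGroupLikeElem.convMul_apply {R C A : Type*} [CommSemiring R] [AddCommMonoid C]
    [Module R C] [Coalgebra R C] [Semiring A] [Algebra R A] {c : C} (hc : IsGroupLikeElem R c)
    (α β : WithConv (C →ₗ[R] A)) : (α * β) c = α c * β c := by
  simp [hc.comul_eq_tmul_self]

lemma map_mul_mul_eq_of_mul_eq_one {F M N : Type*} [Monoid M] [CommMonoid N] [FunLike F M N]
    [MonoidHomClass F M N] (χ : F) {g g' : M} (h : g' * g = 1) (a : M) :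
    χ (g' * (a * g)) = χ a := by
  rw [map_mul, map_mul, mul_left_comm, ← map_mul, h, map_one, mul_one]

lemma IsGroupLike.isGroupLikeElem {g : H} (hg : IsGroupLike k H g) : IsGroupLikeElem k g :=
  ⟨hg.2, hg.1⟩

lemma IsCQT.apply_mul_tmul {r : H ⊗[k] H →ₗ[k] k} (hr : IsCQT k H r) {g : H}
    (hg : IsGroupLike k H g) (a b : H) : r ((a * b) ⊗ₜ[k] g) = r (a ⊗ₜ[k] g) * r (b ⊗ₜ[k] g) := by
  simpa [hg.1] using LinearMap.congr_fun hr.ax2 ((a ⊗ₜ[k] b) ⊗ₜ[k] g)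

/-- `r (1 ⊗ g)` is idempotent by multiplicativity and a unit by convolution invertibility,
since `1 ⊗ g` is group-like. -/
lemma IsCQT.apply_one_tmul {r : H ⊗[k] H →ₗ[k] k} (hr : IsCQT k H r) {g : H}
    (hg : IsGroupLike k H g) : r ((1 : H) ⊗ₜ[k] g) = 1 := by
  obtain ⟨ri, hri, -⟩ := hr.conv_inv
  have hgl := (IsGroupLikeElem.one (R := k) (A := H)).tmul hg.isGroupLikeElem
  have hunit : IsUnit (r ((1 : H) ⊗ₜ[k] g)) := by
    refine IsUnit.of_mul_eq_one (ri ((1 : H) ⊗ₜ[k] g)) ?_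
    rw [← hgl.counit_eq_one, ← hri]
    exact (hgl.convMul_apply (WithConv.toConv r) (WithConv.toConv ri)).symm
  refine (IsIdempotentElem.iff_eq_one_of_isUnit hunit).mp ?_
  rw [IsIdempotentElem, ← hr.apply_mul_tmul hg, one_mul]

def IsCQT.algHomOfGroupLike {r : H ⊗[k] H →ₗ[k] k} (hr : IsCQT k H r) {g : H}
    (hg : IsGroupLike k H g) : H →ₐ[k] k :=
  AlgHom.ofLinearMap (r ∘ₗ (TensorProduct.mk k H H).flip g) (hr.apply_one_tmul hg)
    (hr.apply_mul_tmul hg)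

end

open WithConv in
theorem convMul_counit_comp_comm {R B : Type*} [CommSemiring R] [Semiring B] [Bialgebra R B]
    {g g' : B} (hg' : g' * g = 1) {f : B →ₗ[R] B}
    (hf : ∀ h : B,
      (TensorProduct.map (LinearMap.mulLeft R g' ∘ₗ LinearMap.mulRight R g) f) (comul h) =
        (TensorProduct.map f LinearMap.id) (comul h))
    (χ : B →ₐ[R] R) :
    toConv χ.toLinearMap * toConv (counit ∘ₗ f) = toConv (counit ∘ₗ f) * toConv χ.toLinearMap := by
  set conj := LinearMap.mulLeft R g' ∘ₗ LinearMap.mulRight R g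
  have pair : ∀ α β : B →ₗ[R] R,
      toConv (α ∘ₗ conj) * toConv (β ∘ₗ f) = toConv (α ∘ₗ f) * toConv β := by
    intro α β
    ext h
    simpa only [LinearMap.convMul_apply, TensorProduct.map_map, LinearMap.comp_id]
      using congr(LinearMap.mul' R R (TensorProduct.map α β $(hf h)))
  have conj_invariant : ∀ ψ : B →ₐ[R] R, ψ.toLinearMap ∘ₗ conj = ψ.toLinearMap := fun ψ ↦
    LinearMap.ext (map_mul_mul_eq_of_mul_eq_one ψ hg')
  have counit_one : toConv (counit : B →ₗ[R] R) = 1 := rfl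
  calc toConv χ.toLinearMap * toConv (counit ∘ₗ f)
      = toConv (χ.toLinearMap ∘ₗ conj) * toConv (counit ∘ₗ f) := by rw [conj_invariant]
    _ = toConv (χ.toLinearMap ∘ₗ f) := by rw [pair, counit_one, mul_one]
    _ = toConv ((Bialgebra.counitAlgHom R B).toLinearMap ∘ₗ conj) *
          toConv (χ.toLinearMap ∘ₗ f) := by
        rw [conj_invariant]; exact (one_mul _).symm
    _ = toConv (counit ∘ₗ f) * toConv χ.toLinearMap := pair _ _

open WithConv in
theorem lid_map_lid_map_assoc_map_comul {R C X : Type*} [CommSemiring R] [AddCommMonoid C]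
    [Module R C] [Coalgebra R C] [AddCommMonoid X] [Module R X] (α β : C →ₗ[R] R)
    (t : C ⊗[R] X) :
    ((TensorProduct.lid R X).toLinearMap ∘ₗ
        TensorProduct.map α ((TensorProduct.lid R X).toLinearMap ∘ₗ TensorProduct.map β .id))
      (TensorProduct.assoc R C C X (TensorProduct.map comul .id t)) =
    TensorProduct.lid R X (TensorProduct.map (toConv α * toConv β).ofConv .id t) := by
  induction t using TensorProduct.induction_on with
  | zero => simp
  | add t t' ht ht' => simp only [map_add, ht, ht']
  | tmul c x =>
    simp only [TensorProduct.map_tmul, LinearMap.id_coe, id_eq, TensorProduct.lid_tmul]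
    change _ = LinearMap.mul' R R (TensorProduct.map α β (comul c)) • x
    induction comul (R := R) c using TensorProduct.induction_on with
    | zero => simp
    | add u u' hu hu' => simp only [TensorProduct.add_tmul, map_add, hu, hu', add_smul]
    | tmul a b => simp [mul_smul, smul_comm (β b)]

theorem rForm_counit_f_commute (r : H ⊗[k] H →ₗ[k] k) (hr : IsCQT k H r)
    (g g' : H) (hg : IsGroupLike k H g) (hg' : g' * g = 1 ∧ g * g' = 1)
    (f : H →ₗ[k] H)
    (hf : ∀ h : H,
      (TensorProduct.map (LinearMap.mulLeft k g' ∘ₗ LinearMap.mulRight k g) f)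
          (Coalgebra.comul (R := k) h) =
        (TensorProduct.map f LinearMap.id) (Coalgebra.comul (R := k) h))
    (X : Type) [AddCommGroup X] [Module k X] (ρ : X →ₗ[k] H ⊗[k] X)
    (hcoassoc : ∀ x : X,
      (TensorProduct.assoc k H H X)
        ((TensorProduct.map (Coalgebra.comul (R := k)) LinearMap.id) (ρ x)) =
      (TensorProduct.map LinearMap.id ρ) (ρ x)) :
    ∀ x : X,
      ((TensorProduct.lid k X).toLinearMap ∘ₗ
        TensorProduct.map (r ∘ₗ ((TensorProduct.mk k H H).flip g))
          ((TensorProduct.lid k X).toLinearMap ∘ₗ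
            TensorProduct.map ((Coalgebra.counit (R := k)) ∘ₗ f) LinearMap.id))
        ((TensorProduct.map LinearMap.id ρ) (ρ x)) =
      ((TensorProduct.lid k X).toLinearMap ∘ₗ
        TensorProduct.map ((Coalgebra.counit (R := k)) ∘ₗ f)
          ((TensorProduct.lid k X).toLinearMap ∘ₗ
            TensorProduct.map (r ∘ₗ ((TensorProduct.mk k H H).flip g)) LinearMap.id))
        ((TensorProduct.map LinearMap.id ρ) (ρ x)) := by
  intro x
  have hcomm := convMul_counit_comp_comm hg'.1 hf (hr.algHomOfGroupLike hg)
  rw [← hcoassoc x, lid_map_lid_map_assoc_map_comul, lid_map_lid_map_assoc_map_comul]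
  exact congr(TensorProduct.lid k X (TensorProduct.map ($hcomm).ofConv LinearMap.id (ρ x)))

end
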